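/- Let n ≥ 1 be a natural number. Then d_I(χ_{[0,4)} ⊕ χ_{[3,7)}, χ_{[0,n+1)}) equals 2 if 1 ≤ n ≤ 5, equals 3 if 6 ≤ n ≤ 9, equals n − 6 if 10 ≤ n ≤ 13, and equals (n+1)/2 if n ≥ 14. (This computes the even cohomology interleaving distance over ℚ between the space M₀ over BS¹, whose even barcode is {[0,4), [3,7)}, and ℂPⁿ mapped to BS¹ by a map representing 1 ∈ H², whose even barcode is {[0,n+1)}.) -/

import Mathlib

open scoped ENNReal

/-- A persistence module: a functor from the poset `(ℝ, ≤)` to `K`-vector spaces,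
presented by its structure maps. -/
structure PersistenceModule (K : Type) [Field K] where
  X : ℝ → Type
  [addCommGroupX : ∀ a, AddCommGroup (X a)]
  [moduleX : ∀ a, Module K (X a)]
  map : ∀ {a b : ℝ}, a ≤ b → (X a →ₗ[K] X b)
  map_refl : ∀ a : ℝ, map (le_refl a) = LinearMap.id
  map_trans : ∀ {a b c : ℝ} (hab : a ≤ b) (hbc : b ≤ c),
      map (hab.trans hbc) = (map hbc).comp (map hab)

attribute [instance] PersistenceModule.addCommGroupX PersistenceModule.moduleX

/-- The pair `(φ, ψ)` is an `ε`-interleaving between the persistence modules `F` and `G`: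
both are natural transformations (to the `ε`-shifts) and the two triangle identities hold. -/
structure IsInterleaving (K : Type) [Field K] (ε : ℝ) (F G : PersistenceModule K)
    (φ : ∀ a : ℝ, F.X a →ₗ[K] G.X (a + ε))
    (ψ : ∀ a : ℝ, G.X a →ₗ[K] F.X (a + ε)) : Prop where
  nonneg : 0 ≤ ε
  φ_nat : ∀ {a b : ℝ} (hab : a ≤ b),
      (φ b).comp (F.map hab) = (G.map (by linarith)).comp (φ a)
  ψ_nat : ∀ {a b : ℝ} (hab : a ≤ b),
      (ψ b).comp (G.map hab) = (F.map (by linarith)).comp (ψ a)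
  tri₁ : ∀ (a : ℝ) (h : a ≤ a + ε + ε), (ψ (a + ε)).comp (φ a) = F.map h
  tri₂ : ∀ (a : ℝ) (h : a ≤ a + ε + ε), (φ (a + ε)).comp (ψ a) = G.map h

/-- `F` and `G` are `ε`-interleaved. -/
def Interleaved (K : Type) [Field K] (ε : ℝ) (F G : PersistenceModule K) : Prop :=
  ∃ φ ψ, IsInterleaving K ε F G φ ψ

/-- The interleaving distance `d_I(F, G) ∈ [0, ∞]`: the infimum of the set of `ε ≥ 0` such
that `F` and `G` are `ε`-interleaved (`∞` when this set is empty). -/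
noncomputable def interleavingDist (K : Type) [Field K] (F G : PersistenceModule K) : ℝ≥0∞ :=
  sInf {x : ℝ≥0∞ | ∃ ε : ℝ, 0 ≤ ε ∧ Interleaved K ε F G ∧ x = ENNReal.ofReal ε}

attribute [local instance] Classical.propDecidable

lemma subsingleton_ite_bot (K : Type) [Field K] {J : Set ℝ} {a : ℝ} (ha : a ∉ J) :
    Subsingleton ↥(if a ∈ J then (⊤ : Submodule K K) else ⊥) := by
  rw [if_neg ha]
  infer_instance

/-- The interval module `χ_J` associated with an interval `J ⊆ ℝ`: the vector space `K`
at points of `J` (realized as `⊤ ≤ K`), and `0` elsewhere, with identity/zero structure maps. -/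
noncomputable def intervalModule (K : Type) [Field K] (J : Set ℝ) (hJ : J.OrdConnected) :
    PersistenceModule K where
  X a := ↥(if a ∈ J then (⊤ : Submodule K K) else ⊥)
  map {a b} hab :=
    if h : a ∈ J ∧ b ∈ J then
      Submodule.inclusion (le_of_eq (by rw [if_pos h.1, if_pos h.2]))
    else 0
  map_refl a := by
    try dsimp only
    by_cases ha : a ∈ J
    · rw [dif_pos ⟨ha, ha⟩]
      rfl
    · rw [dif_neg (fun h => ha h.1)]
      haveI := subsingleton_ite_bot K (J := J) ha
      exact LinearMap.ext fun x => Subsingleton.elim _ _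
  map_trans := by
    intro a b c hab hbc
    try dsimp only
    by_cases hac : a ∈ J ∧ c ∈ J
    · have hb : b ∈ J := hJ.out hac.1 hac.2 ⟨hab, hbc⟩
      rw [dif_pos hac, dif_pos ⟨hb, hac.2⟩, dif_pos ⟨hac.1, hb⟩]
      rfl
    · rw [dif_neg hac]
      rcases not_and_or.mp hac with ha | hc
      · haveI := subsingleton_ite_bot K (J := J) ha
        exact LinearMap.ext fun x => by
          rw [Subsingleton.elim x 0]
          simp
      · haveI := subsingleton_ite_bot K (J := J) hc
        exact LinearMap.ext fun x => Subsingleton.elim _ _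

/-- The interval module `χ_{[a,b)}`. -/
noncomputable def chiIco (K : Type) [Field K] (a b : ℝ) : PersistenceModule K :=
  intervalModule K (Set.Ico a b) Set.ordConnected_Ico

/-- The interval module `χ_{[a,∞)}`. -/
noncomputable def chiIci (K : Type) [Field K] (a : ℝ) : PersistenceModule K :=
  intervalModule K (Set.Ici a) Set.ordConnected_Ici

/-- The zero persistence module `χ_∅`. -/
noncomputable def zeroPM (K : Type) [Field K] : PersistenceModule K :=
  intervalModule K (∅ : Set ℝ) Set.ordConnected_empty

/-- The pointwise direct sum of a family of persistence modules. -/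
noncomputable def dsum (K : Type) [Field K] {ι : Type} (F : ι → PersistenceModule K) :
    PersistenceModule K where
  X a := Π₀ i, (F i).X a
  map {a b} hab := DFinsupp.mapRange.linearMap fun i => (F i).map hab
  map_refl a := by
    try dsimp only
    have : (fun i => (F i).map (le_refl a))
        = fun i => (LinearMap.id : (F i).X a →ₗ[K] (F i).X a) :=
      funext fun i => (F i).map_refl a
    rw [this]
    exact DFinsupp.mapRange.linearMap_id
  map_trans {a b c} hab hbc := by
    try dsimp only
    have : (fun i => (F i).map (hab.trans hbc)) =
        fun i => ((F i).map hbc).comp ((F i).map hab) :=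
      funext fun i => (F i).map_trans hab hbc
    rw [this]
    exact DFinsupp.mapRange.linearMap_comp _ _

section Aux
variable {K : Type} [Field K]

/-- The canonical map between interval-module fibers. -/
noncomputable def imMap (J J' : Set ℝ) (a b : ℝ) :
    ↥(if a ∈ J then (⊤ : Submodule K K) else ⊥) →ₗ[K]
      ↥(if b ∈ J' then (⊤ : Submodule K K) else ⊥) :=
  if h : a ∈ J ∧ b ∈ J' then
    Submodule.inclusion (le_of_eq (by rw [if_pos h.1, if_pos h.2])) else 0

lemma imMap_zero {J J' : Set ℝ} {a b : ℝ} (h : ¬(a ∈ J ∧ b ∈ J')) :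
    (imMap (K := K) J J' a b) = 0 := dif_neg h

noncomputable def genv (J : Set ℝ) (a : ℝ) (ha : a ∈ J) :
    ↥(if a ∈ J then (⊤ : Submodule K K) else ⊥) :=
  ⟨1, by rw [if_pos ha]; trivial⟩

lemma genv_ne_zero {J : Set ℝ} {a : ℝ} (ha : a ∈ J) : genv (K := K) J a ha ≠ 0 := by
  intro h
  exact one_ne_zero (congrArg Subtype.val h)

lemma imMap_genv {J J' : Set ℝ} {a b : ℝ} (ha : a ∈ J) (hb : b ∈ J') :
    imMap (K := K) J J' a b (genv J a ha) = genv J' b hb := by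
  rw [imMap, dif_pos ⟨ha, hb⟩]
  rfl

lemma imMap_comp {J J' J'' : Set ℝ} {a b c : ℝ}
    (h : a ∈ J → c ∈ J'' → b ∈ J') :
    (imMap (K := K) J' J'' b c).comp (imMap J J' a b) = imMap J J'' a c := by
  by_cases hac : a ∈ J ∧ c ∈ J''
  · have hb := h hac.1 hac.2
    rw [imMap, imMap, imMap, dif_pos ⟨hb, hac.2⟩, dif_pos ⟨hac.1, hb⟩, dif_pos hac]
    rfl
  · rw [imMap_zero hac]
    rcases not_and_or.mp hac with ha | hc
    · rw [imMap_zero (fun hh => ha hh.1), LinearMap.comp_zero]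
    · rw [show imMap (K := K) J' J'' b c = 0 from imMap_zero (fun hh => hc hh.2),
        LinearMap.zero_comp]

lemma fiber_eq_zero {J : Set ℝ} {a : ℝ} (ha : a ∉ J)
    (x : ↥(if a ∈ J then (⊤ : Submodule K K) else ⊥)) : x = 0 := by
  haveI := subsingleton_ite_bot K (J := J) ha
  exact Subsingleton.elim _ _

lemma chiIco_map (c d : ℝ) {a b : ℝ} (hab : a ≤ b) :
    (chiIco K c d).map hab = imMap (Set.Ico c d) (Set.Ico c d) a b := rfl

lemma im_ext {J : Set ℝ} {a : ℝ} {N : Type} [AddCommGroup N] [Module K N]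
    {f g : ↥(if a ∈ J then (⊤ : Submodule K K) else ⊥) →ₗ[K] N}
    (h : ∀ ha : a ∈ J, f (genv J a ha) = g (genv J a ha)) : f = g := by
  by_cases ha : a ∈ J
  · refine LinearMap.ext fun x => ?_
    have hx : x = (x : K) • genv J a ha := by
      refine Subtype.ext ?_
      rw [SetLike.val_smul]
      simp [genv]
    rw [hx, map_smul, map_smul, h ha]
  · haveI := subsingleton_ite_bot K (J := J) ha
    exact LinearMap.ext fun x => by rw [Subsingleton.elim x 0, map_zero, map_zero]

end Aux
section Aux2
attribute [local instance 5] Classical.propDecidable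
variable {K : Type} [Field K]

lemma dsum_map {ι : Type} (fam : ι → PersistenceModule K) {a b : ℝ} (hab : a ≤ b) :
    (dsum K fam).map hab
      = DFinsupp.mapRange.linearMap (fun i => (fam i).map hab) := rfl

lemma dsum_map_single {ι : Type} [DecidableEq ι] (fam : ι → PersistenceModule K) {a b : ℝ}
    (hab : a ≤ b) (i : ι) (x : (fam i).X a) :
    (dsum K fam).map hab (DFinsupp.single i x)
      = DFinsupp.single i ((fam i).map hab x) := by
  rw [dsum_map]
  exact DFinsupp.mapRange_single (hf := fun i => ((fam i).map hab).map_zero)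

lemma fam0_map {a b : ℝ} (hab : a ≤ b) :
    ((![chiIco K 0 4, chiIco K 3 7]) 0).map hab
      = imMap (Set.Ico 0 4) (Set.Ico 0 4) a b := rfl

lemma fam1_map {a b : ℝ} (hab : a ≤ b) :
    ((![chiIco K 0 4, chiIco K 3 7]) 1).map hab
      = imMap (Set.Ico 3 7) (Set.Ico 3 7) a b := rfl

end Aux2
section Aux3
attribute [local instance 5] Classical.propDecidable
variable {K : Type} [Field K]

/-- The fixed two-interval family. -/
noncomputable abbrev Fam (K : Type) [Field K] : Fin 2 → PersistenceModule K :=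
  ![chiIco K 0 4, chiIco K 3 7]

noncomputable abbrev lap (K : Type) [Field K] (a : ℝ) (i : Fin 2) :
    (dsum K (Fam K)).X a →ₗ[K] ((Fam K) i).X a :=
  DFinsupp.lapply (R := K) (M := fun i => ((Fam K) i).X a) i

noncomputable abbrev lsing (K : Type) [Field K] (a : ℝ) (i : Fin 2) :
    ((Fam K) i).X a →ₗ[K] (dsum K (Fam K)).X a :=
  DFinsupp.lsingle (R := K) (M := fun i => ((Fam K) i).X a) i

lemma Fext {c : ℝ} {y z : (dsum K (Fam K)).X c}
    (h0 : lap K c 0 y = lap K c 0 z) (h1 : lap K c 1 y = lap K c 1 z) : y = z := by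
  refine DFinsupp.ext fun i => ?_
  fin_cases i
  exacts [h0, h1]

lemma mem_Ico_mk {c d x : ℝ} (h1 : c ≤ x) (h2 : x < d) : x ∈ Set.Ico c d :=
  Set.mem_Ico.mpr ⟨h1, h2⟩

lemma UB_zero {m ε : ℝ} (hε : 0 ≤ ε) (h4 : 4 ≤ ε + ε) (hm : m ≤ ε + ε) :
    Interleaved K ε (dsum K (Fam K)) (chiIco K 0 m) := by
  refine ⟨fun a => 0, fun a => 0, hε, ?_, ?_, ?_, ?_⟩
  · intro a b hab; simp
  · intro a b hab; simp
  · intro a h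
    refine LinearMap.ext fun x => ?_
    refine Fext ?_ ?_
    · show (0 : ((Fam K) 0).X (a + ε + ε)) =
        imMap (Set.Ico (0:ℝ) 4) (Set.Ico (0:ℝ) 4) a (a+ε+ε) (lap K a 0 x)
      rw [imMap_zero (fun hh => by
        have h1 := (Set.mem_Ico.mp hh.1).1; have h2 := (Set.mem_Ico.mp hh.2).2; linarith)]
      rfl
    · show (0 : ((Fam K) 1).X (a + ε + ε)) =
        imMap (Set.Ico (3:ℝ) 7) (Set.Ico (3:ℝ) 7) a (a+ε+ε) (lap K a 1 x)
      rw [imMap_zero (fun hh => by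
        have h1 := (Set.mem_Ico.mp hh.1).1; have h2 := (Set.mem_Ico.mp hh.2).2; linarith)]
      rfl
  · intro a h
    refine LinearMap.ext fun x => ?_
    show (0 : (chiIco K 0 m).X (a + ε + ε)) = imMap (Set.Ico (0:ℝ) m) (Set.Ico (0:ℝ) m) a (a+ε+ε) x
    rw [imMap_zero (fun hh => by
      have h1 := (Set.mem_Ico.mp hh.1).1; have h2 := (Set.mem_Ico.mp hh.2).2; linarith)]
    rfl

lemma UB_first {m ε : ℝ} (hε2 : 2 ≤ ε) (hm4 : m ≤ 4 + ε) (h4m : 4 ≤ m + ε) :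
    Interleaved K ε (dsum K (Fam K)) (chiIco K 0 m) := by
  have hε : (0:ℝ) ≤ ε := by linarith
  refine ⟨fun a => (imMap (Set.Ico (0:ℝ) 4) (Set.Ico (0:ℝ) m) a (a+ε)).comp (lap K a 0),
    fun a => (lsing K (a+ε) 0).comp (imMap (Set.Ico (0:ℝ) m) (Set.Ico (0:ℝ) 4) a (a+ε)),
    hε, ?_, ?_, ?_, ?_⟩
  · -- φ_nat
    intro a b hab
    refine LinearMap.ext fun x => ?_
    show imMap (Set.Ico (0:ℝ) 4) (Set.Ico (0:ℝ) m) b (b+ε)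
        (imMap (Set.Ico (0:ℝ) 4) (Set.Ico (0:ℝ) 4) a b (lap K a 0 x))
      = imMap (Set.Ico (0:ℝ) m) (Set.Ico (0:ℝ) m) (a+ε) (b+ε)
        (imMap (Set.Ico (0:ℝ) 4) (Set.Ico (0:ℝ) m) a (a+ε) (lap K a 0 x))
    refine (LinearMap.congr_fun (imMap_comp (fun ha hb => mem_Ico_mk
        (le_trans (Set.mem_Ico.mp ha).1 hab)
        (by have := (Set.mem_Ico.mp hb).2; linarith))) (lap K a 0 x)).trans
      (LinearMap.congr_fun (imMap_comp (fun ha hb => mem_Ico_mk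
        (by have := (Set.mem_Ico.mp ha).1; linarith)
        (by have := (Set.mem_Ico.mp hb).2; linarith [add_le_add_right hab ε]))) (lap K a 0 x)).symm
  · -- ψ_nat
    intro a b hab
    refine LinearMap.ext fun x => ?_
    refine Fext ?_ ?_
    · show imMap (Set.Ico (0:ℝ) m) (Set.Ico (0:ℝ) 4) b (b+ε)
          (imMap (Set.Ico (0:ℝ) m) (Set.Ico (0:ℝ) m) a b x)
        = imMap (Set.Ico (0:ℝ) 4) (Set.Ico (0:ℝ) 4) (a+ε) (b+ε)
          (imMap (Set.Ico (0:ℝ) m) (Set.Ico (0:ℝ) 4) a (a+ε) x)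
      refine (LinearMap.congr_fun (imMap_comp (fun ha hb => mem_Ico_mk
          (le_trans (Set.mem_Ico.mp ha).1 hab)
          (by have := (Set.mem_Ico.mp hb).2; linarith))) x).trans
        (LinearMap.congr_fun (imMap_comp (fun ha hb => mem_Ico_mk
          (by have := (Set.mem_Ico.mp ha).1; linarith)
          (by have := (Set.mem_Ico.mp hb).2; linarith [add_le_add_right hab ε]))) x).symm
    · show (0 : ((Fam K) 1).X (b+ε)) = imMap (Set.Ico (3:ℝ) 7) (Set.Ico (3:ℝ) 7) (a+ε) (b+ε)
        (lap K (a+ε) 1 (lsing K (a+ε) 0 (imMap (Set.Ico (0:ℝ) m) (Set.Ico (0:ℝ) 4) a (a+ε) x)))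
      rw [show lap K (a+ε) 1 (lsing K (a+ε) 0
          (imMap (Set.Ico (0:ℝ) m) (Set.Ico (0:ℝ) 4) a (a+ε) x)) = 0 from rfl]
      exact (map_zero _).symm
  · -- tri₁
    intro a h
    refine LinearMap.ext fun x => ?_
    refine Fext ?_ ?_
    · show imMap (Set.Ico (0:ℝ) m) (Set.Ico (0:ℝ) 4) (a+ε) (a+ε+ε)
          (imMap (Set.Ico (0:ℝ) 4) (Set.Ico (0:ℝ) m) a (a+ε) (lap K a 0 x))
        = imMap (Set.Ico (0:ℝ) 4) (Set.Ico (0:ℝ) 4) a (a+ε+ε) (lap K a 0 x)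
      exact LinearMap.congr_fun (imMap_comp (fun ha hb => mem_Ico_mk
        (by have := (Set.mem_Ico.mp ha).1; linarith)
        (by have := (Set.mem_Ico.mp hb).2; linarith))) (lap K a 0 x)
    · show (0 : ((Fam K) 1).X (a+ε+ε))
        = imMap (Set.Ico (3:ℝ) 7) (Set.Ico (3:ℝ) 7) a (a+ε+ε) (lap K a 1 x)
      rw [imMap_zero (fun hh => by
        have h1 := (Set.mem_Ico.mp hh.1).1; have h2 := (Set.mem_Ico.mp hh.2).2; linarith)]
      rfl
  · -- tri₂
    intro a h
    refine LinearMap.ext fun x => ?_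
    show imMap (Set.Ico (0:ℝ) 4) (Set.Ico (0:ℝ) m) (a+ε) (a+ε+ε)
        (imMap (Set.Ico (0:ℝ) m) (Set.Ico (0:ℝ) 4) a (a+ε) x)
      = imMap (Set.Ico (0:ℝ) m) (Set.Ico (0:ℝ) m) a (a+ε+ε) x
    exact LinearMap.congr_fun (imMap_comp (fun ha hb => mem_Ico_mk
      (by have := (Set.mem_Ico.mp ha).1; linarith)
      (by have := (Set.mem_Ico.mp hb).2; linarith))) x

end Aux3
section Aux4
attribute [local instance 5] Classical.propDecidable
variable {K : Type} [Field K]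

lemma UB_second {m ε : ℝ} (hε3 : 3 ≤ ε) (hm7 : m ≤ 7 + ε) (h7m : 7 ≤ m + ε) :
    Interleaved K ε (dsum K (Fam K)) (chiIco K 0 m) := by
  have hε : (0:ℝ) ≤ ε := by linarith
  refine ⟨fun a => (imMap (Set.Ico (3:ℝ) 7) (Set.Ico (0:ℝ) m) a (a+ε)).comp (lap K a 1),
    fun a => (lsing K (a+ε) 1).comp (imMap (Set.Ico (0:ℝ) m) (Set.Ico (3:ℝ) 7) a (a+ε)),
    hε, ?_, ?_, ?_, ?_⟩
  · -- φ_nat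
    intro a b hab
    refine LinearMap.ext fun x => ?_
    show imMap (Set.Ico (3:ℝ) 7) (Set.Ico (0:ℝ) m) b (b+ε)
        (imMap (Set.Ico (3:ℝ) 7) (Set.Ico (3:ℝ) 7) a b (lap K a 1 x))
      = imMap (Set.Ico (0:ℝ) m) (Set.Ico (0:ℝ) m) (a+ε) (b+ε)
        (imMap (Set.Ico (3:ℝ) 7) (Set.Ico (0:ℝ) m) a (a+ε) (lap K a 1 x))
    refine (LinearMap.congr_fun (imMap_comp (fun ha hb => mem_Ico_mk
        (le_trans (Set.mem_Ico.mp ha).1 hab)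
        (by have := (Set.mem_Ico.mp hb).2; linarith))) (lap K a 1 x)).trans
      (LinearMap.congr_fun (imMap_comp (fun ha hb => mem_Ico_mk
        (by have := (Set.mem_Ico.mp ha).1; linarith)
        (by have := (Set.mem_Ico.mp hb).2; linarith [add_le_add_right hab ε]))) (lap K a 1 x)).symm
  · -- ψ_nat
    intro a b hab
    refine LinearMap.ext fun x => ?_
    refine Fext ?_ ?_
    · show (0 : ((Fam K) 0).X (b+ε)) = imMap (Set.Ico (0:ℝ) 4) (Set.Ico (0:ℝ) 4) (a+ε) (b+ε)
        (lap K (a+ε) 0 (lsing K (a+ε) 1 (imMap (Set.Ico (0:ℝ) m) (Set.Ico (3:ℝ) 7) a (a+ε) x)))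
      rw [show lap K (a+ε) 0 (lsing K (a+ε) 1
          (imMap (Set.Ico (0:ℝ) m) (Set.Ico (3:ℝ) 7) a (a+ε) x)) = 0 from rfl]
      exact (map_zero _).symm
    · show imMap (Set.Ico (0:ℝ) m) (Set.Ico (3:ℝ) 7) b (b+ε)
          (imMap (Set.Ico (0:ℝ) m) (Set.Ico (0:ℝ) m) a b x)
        = imMap (Set.Ico (3:ℝ) 7) (Set.Ico (3:ℝ) 7) (a+ε) (b+ε)
          (imMap (Set.Ico (0:ℝ) m) (Set.Ico (3:ℝ) 7) a (a+ε) x)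
      refine (LinearMap.congr_fun (imMap_comp (fun ha hb => mem_Ico_mk
          (le_trans (Set.mem_Ico.mp ha).1 hab)
          (by have := (Set.mem_Ico.mp hb).2; linarith))) x).trans
        (LinearMap.congr_fun (imMap_comp (fun ha hb => mem_Ico_mk
          (by have := (Set.mem_Ico.mp ha).1; linarith)
          (by have := (Set.mem_Ico.mp hb).2; linarith [add_le_add_right hab ε]))) x).symm
  · -- tri₁
    intro a h
    refine LinearMap.ext fun x => ?_
    refine Fext ?_ ?_
    · show (0 : ((Fam K) 0).X (a+ε+ε))
        = imMap (Set.Ico (0:ℝ) 4) (Set.Ico (0:ℝ) 4) a (a+ε+ε) (lap K a 0 x)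
      rw [imMap_zero (fun hh => by
        have h1 := (Set.mem_Ico.mp hh.1).1; have h2 := (Set.mem_Ico.mp hh.2).2; linarith)]
      rfl
    · show imMap (Set.Ico (0:ℝ) m) (Set.Ico (3:ℝ) 7) (a+ε) (a+ε+ε)
          (imMap (Set.Ico (3:ℝ) 7) (Set.Ico (0:ℝ) m) a (a+ε) (lap K a 1 x))
        = imMap (Set.Ico (3:ℝ) 7) (Set.Ico (3:ℝ) 7) a (a+ε+ε) (lap K a 1 x)
      exact LinearMap.congr_fun (imMap_comp (fun ha hb => mem_Ico_mk
        (by have := (Set.mem_Ico.mp ha).1; linarith)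
        (by have := (Set.mem_Ico.mp hb).2; linarith))) (lap K a 1 x)
  · -- tri₂
    intro a h
    refine LinearMap.ext fun x => ?_
    show imMap (Set.Ico (3:ℝ) 7) (Set.Ico (0:ℝ) m) (a+ε) (a+ε+ε)
        (imMap (Set.Ico (0:ℝ) m) (Set.Ico (3:ℝ) 7) a (a+ε) x)
      = imMap (Set.Ico (0:ℝ) m) (Set.Ico (0:ℝ) m) a (a+ε+ε) x
    exact LinearMap.congr_fun (imMap_comp (fun ha hb => mem_Ico_mk
      (by have := (Set.mem_Ico.mp ha).1; linarith)
      (by have := (Set.mem_Ico.mp hb).2; linarith))) x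

end Aux4
section Aux5
attribute [local instance 5] Classical.propDecidable
variable {K : Type} [Field K]

lemma LB_arg1 {m ε : ℝ} (hm : m ≤ 5) (hε : ε < 2)
    (h : Interleaved K ε (dsum K (Fam K)) (chiIco K 0 m)) : False := by
  obtain ⟨φ, ψ, hI⟩ := h
  have hε0 := hI.nonneg
  set a : ℝ := 5 - ε with ha_def
  have ha : a ∈ Set.Ico (3:ℝ) 7 := mem_Ico_mk (by simp only [ha_def]; linarith)
    (by simp only [ha_def]; linarith)
  have hb : a + ε + ε ∈ Set.Ico (3:ℝ) 7 := mem_Ico_mk (by simp only [ha_def]; linarith)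
    (by simp only [ha_def]; linarith)
  have hle : a ≤ a + ε + ε := by linarith
  set u : ((Fam K) 1).X a := genv (Set.Ico (3:ℝ) 7) a ha with hu
  have key := LinearMap.congr_fun (hI.tri₁ a hle) (lsing K a 1 u)
  rw [LinearMap.comp_apply] at key
  have hz : φ a (lsing K a 1 u) = 0 :=
    fiber_eq_zero (fun hh => by
      have := (Set.mem_Ico.mp hh).2; simp only [ha_def] at this; linarith) _
  rw [hz, map_zero] at key
  have h3 : lap K (a+ε+ε) 1 ((dsum K (Fam K)).map hle (lsing K a 1 u))
      = imMap (Set.Ico (3:ℝ) 7) (Set.Ico (3:ℝ) 7) a (a+ε+ε) u := rfl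
  have h4 := congrArg (lap K (a+ε+ε) 1) key
  rw [map_zero, h3, hu, imMap_genv ha hb] at h4
  exact genv_ne_zero hb h4.symm

lemma LB_arg2 {m ε : ℝ} (hε3 : ε < 3) (hm : 4 + ε < m)
    (h : Interleaved K ε (dsum K (Fam K)) (chiIco K 0 m)) : False := by
  obtain ⟨φ, ψ, hI⟩ := h
  have hε0 := hI.nonneg
  have h0 : (0:ℝ) ∈ Set.Ico (0:ℝ) m := mem_Ico_mk le_rfl (by linarith)
  set v : (chiIco K 0 m).X 0 := genv (Set.Ico (0:ℝ) m) 0 h0 with hv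
  set w : (dsum K (Fam K)).X (0+ε) := ψ 0 v with hw
  have h1 : lap K (0+ε) 1 w = 0 :=
    fiber_eq_zero (fun hh => by have := (Set.mem_Ico.mp hh).1; linarith) _
  have h4 : (0:ℝ) + ε ≤ 4 := by linarith
  have hFw : (dsum K (Fam K)).map h4 w = 0 := by
    refine Fext ?_ ?_
    · have e : lap K 4 0 ((dsum K (Fam K)).map h4 w)
          = imMap (Set.Ico (0:ℝ) 4) (Set.Ico (0:ℝ) 4) (0+ε) 4 (lap K (0+ε) 0 w) := rfl
      rw [e, imMap_zero (fun hh => by have := (Set.mem_Ico.mp hh.2).2; linarith)]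
      rfl
    · have e : lap K 4 1 ((dsum K (Fam K)).map h4 w)
          = imMap (Set.Ico (3:ℝ) 7) (Set.Ico (3:ℝ) 7) (0+ε) 4 (lap K (0+ε) 1 w) := rfl
      rw [e, h1]
      exact (map_zero _).trans (map_zero _).symm
  have hnat := LinearMap.congr_fun (hI.φ_nat h4) w
  rw [LinearMap.comp_apply, LinearMap.comp_apply, hFw, map_zero] at hnat
  have htri := LinearMap.congr_fun (hI.tri₂ 0 (by linarith)) v
  rw [LinearMap.comp_apply, ← hw] at htri
  rw [htri] at hnat
  -- hnat : 0 = G.map _ (G.map _ v)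
  have hm1 : (0:ℝ) + ε + ε ∈ Set.Ico (0:ℝ) m := mem_Ico_mk (by linarith) (by linarith)
  have hm2 : (4:ℝ) + ε ∈ Set.Ico (0:ℝ) m := mem_Ico_mk (by linarith) (by linarith)
  have e1 : (chiIco K 0 m).map (show (0:ℝ) ≤ 0+ε+ε by linarith) v
      = imMap (Set.Ico (0:ℝ) m) (Set.Ico (0:ℝ) m) 0 (0+ε+ε) v := rfl
  have e2 : ∀ z, (chiIco K 0 m).map (show (0:ℝ)+ε+ε ≤ 4+ε by linarith) z
      = imMap (Set.Ico (0:ℝ) m) (Set.Ico (0:ℝ) m) (0+ε+ε) (4+ε) z := fun z => rfl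
  rw [e1, hv, imMap_genv h0 hm1] at hnat
  exact genv_ne_zero hm2 (hnat.trans ((e2 _).trans (imMap_genv hm1 hm2))).symm

lemma LB_arg3 {m ε : ℝ} (hε7 : ε ≤ 7) (hm : 7 + ε < m)
    (h : Interleaved K ε (dsum K (Fam K)) (chiIco K 0 m)) : False := by
  obtain ⟨φ, ψ, hI⟩ := h
  have hε0 := hI.nonneg
  have h0 : (0:ℝ) ∈ Set.Ico (0:ℝ) m := mem_Ico_mk le_rfl (by linarith)
  set v : (chiIco K 0 m).X 0 := genv (Set.Ico (0:ℝ) m) 0 h0 with hv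
  set w : (dsum K (Fam K)).X (0+ε) := ψ 0 v with hw
  have h7 : (0:ℝ) + ε ≤ 7 := by linarith
  have hFw : (dsum K (Fam K)).map h7 w = 0 := by
    refine Fext ?_ ?_
    · exact (fiber_eq_zero (fun hh => by have := (Set.mem_Ico.mp hh).2; linarith) _).trans
        (map_zero _).symm
    · exact (fiber_eq_zero (fun hh => by have := (Set.mem_Ico.mp hh).2; linarith) _).trans
        (map_zero _).symm
  have hnat := LinearMap.congr_fun (hI.φ_nat h7) w
  rw [LinearMap.comp_apply, LinearMap.comp_apply, hFw, map_zero] at hnat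
  have htri := LinearMap.congr_fun (hI.tri₂ 0 (by linarith)) v
  rw [LinearMap.comp_apply, ← hw] at htri
  rw [htri] at hnat
  have hm1 : (0:ℝ) + ε + ε ∈ Set.Ico (0:ℝ) m := mem_Ico_mk (by linarith) (by linarith)
  have hm2 : (7:ℝ) + ε ∈ Set.Ico (0:ℝ) m := mem_Ico_mk (by linarith) (by linarith)
  have e1 : (chiIco K 0 m).map (show (0:ℝ) ≤ 0+ε+ε by linarith) v
      = imMap (Set.Ico (0:ℝ) m) (Set.Ico (0:ℝ) m) 0 (0+ε+ε) v := rfl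
  have e2 : ∀ z, (chiIco K 0 m).map (show (0:ℝ)+ε+ε ≤ 7+ε by linarith) z
      = imMap (Set.Ico (0:ℝ) m) (Set.Ico (0:ℝ) m) (0+ε+ε) (7+ε) z := fun z => rfl
  rw [e1, hv, imMap_genv h0 hm1] at hnat
  exact genv_ne_zero hm2 (hnat.trans ((e2 _).trans (imMap_genv hm1 hm2))).symm

lemma LB_arg4 {m ε : ℝ} (hε7 : 7 < ε) (hm : ε + ε < m)
    (h : Interleaved K ε (dsum K (Fam K)) (chiIco K 0 m)) : False := by
  obtain ⟨φ, ψ, hI⟩ := h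
  have hε0 := hI.nonneg
  have h0 : (0:ℝ) ∈ Set.Ico (0:ℝ) m := mem_Ico_mk le_rfl (by linarith)
  set v : (chiIco K 0 m).X 0 := genv (Set.Ico (0:ℝ) m) 0 h0 with hv
  have hw0 : ψ 0 v = 0 := by
    refine Fext ?_ ?_
    · exact (fiber_eq_zero (fun hh => by have := (Set.mem_Ico.mp hh).2; linarith) _).trans
        (map_zero _).symm
    · exact (fiber_eq_zero (fun hh => by have := (Set.mem_Ico.mp hh).2; linarith) _).trans
        (map_zero _).symm
  have htri := LinearMap.congr_fun (hI.tri₂ 0 (by linarith)) v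
  rw [LinearMap.comp_apply, hw0, map_zero] at htri
  have hm1 : (0:ℝ) + ε + ε ∈ Set.Ico (0:ℝ) m := mem_Ico_mk (by linarith) (by linarith)
  have e1 : (chiIco K 0 m).map (show (0:ℝ) ≤ 0+ε+ε by linarith) v
      = imMap (Set.Ico (0:ℝ) m) (Set.Ico (0:ℝ) m) 0 (0+ε+ε) v := rfl
  rw [e1, hv, imMap_genv h0 hm1] at htri
  exact genv_ne_zero hm1 htri.symm

end Aux5
/-- `d_I(χ_{[0,4)} ⊕ χ_{[3,7)}, χ_{[0,n+1)})` equals `2` for `1 ≤ n ≤ 5`,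
`3` for `6 ≤ n ≤ 9`, `n - 6` for `10 ≤ n ≤ 13` and `(n+1)/2` for `n ≥ 14`
(the even cohomology interleaving distance between `M₀` and `ℂPⁿ` over `BS¹`). -/
theorem interleavingDist_M0_CPn {K : Type} [Field K] (n : ℕ) (hn : 1 ≤ n) :
    interleavingDist K (dsum K ![chiIco K 0 4, chiIco K 3 7]) (chiIco K 0 ((n : ℝ) + 1))
      = if n ≤ 5 then 2
        else if n ≤ 9 then 3
        else if n ≤ 13 then ENNReal.ofReal ((n : ℝ) - 6)
        else ENNReal.ofReal (((n : ℝ) + 1) / 2) := by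
  have hn1 : (1:ℝ) ≤ (n:ℝ) := by exact_mod_cast hn
  refine le_antisymm ?_ ?_
  · -- upper bound: exhibit an interleaving at the exact value
    by_cases h5 : n ≤ 5
    · have hc : (n:ℝ) ≤ 5 := by exact_mod_cast h5
      rw [if_pos h5]
      refine sInf_le ⟨2, by norm_num, ?_, (ENNReal.ofReal_ofNat 2).symm⟩
      exact UB_first (le_refl 2) (by linarith) (by linarith)
    · have hc : (5:ℝ) < (n:ℝ) := by exact_mod_cast not_le.mp h5
      rw [if_neg h5]
      by_cases h9 : n ≤ 9
      · have hc9 : (n:ℝ) ≤ 9 := by exact_mod_cast h9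
        rw [if_pos h9]
        refine sInf_le ⟨3, by norm_num, ?_, (ENNReal.ofReal_ofNat 3).symm⟩
        exact UB_second (le_refl 3) (by linarith) (by linarith)
      · have hc9 : (9:ℝ) < (n:ℝ) := by exact_mod_cast not_le.mp h9
        rw [if_neg h9]
        by_cases h13 : n ≤ 13
        · have hc13 : (n:ℝ) ≤ 13 := by exact_mod_cast h13
          rw [if_pos h13]
          refine sInf_le ⟨(n:ℝ) - 6, by linarith, ?_, rfl⟩
          exact UB_second (by linarith) (by linarith) (by linarith)
        · have hc13 : (13:ℝ) < (n:ℝ) := by exact_mod_cast not_le.mp h13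
          rw [if_neg h13]
          refine sInf_le ⟨((n:ℝ) + 1) / 2, by linarith, ?_, rfl⟩
          exact UB_zero (by linarith) (by linarith) (by linarith)
  · -- lower bound
    refine le_sInf ?_
    rintro x ⟨ε, hε0, hint, rfl⟩
    by_cases h5 : n ≤ 5
    · have hc : (n:ℝ) ≤ 5 := by exact_mod_cast h5
      rw [if_pos h5, ← ENNReal.ofReal_ofNat 2]
      refine ENNReal.ofReal_le_ofReal ?_
      by_contra hlt
      push_neg at hlt
      norm_num at hlt
      by_cases h4 : n ≤ 4
      · have hc4 : (n:ℝ) ≤ 4 := by exact_mod_cast h4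
        exact LB_arg1 (by linarith) hlt hint
      · have hc4 : (5:ℝ) ≤ (n:ℝ) := by exact_mod_cast Nat.succ_le_of_lt (not_le.mp h4)
        exact LB_arg2 (by linarith) (by linarith) hint
    · have hc : (5:ℝ) < (n:ℝ) := by exact_mod_cast not_le.mp h5
      rw [if_neg h5]
      by_cases h9 : n ≤ 9
      · rw [if_pos h9, ← ENNReal.ofReal_ofNat 3]
        refine ENNReal.ofReal_le_ofReal ?_
        by_contra hlt
        push_neg at hlt
        norm_num at hlt
        have hc6 : (6:ℝ) ≤ (n:ℝ) := by exact_mod_cast Nat.succ_le_of_lt (not_le.mp h5)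
        exact LB_arg2 (by linarith) (by linarith) hint
      · have hc9 : (9:ℝ) < (n:ℝ) := by exact_mod_cast not_le.mp h9
        rw [if_neg h9]
        by_cases h13 : n ≤ 13
        · have hc13 : (n:ℝ) ≤ 13 := by exact_mod_cast h13
          rw [if_pos h13]
          refine ENNReal.ofReal_le_ofReal ?_
          by_contra hlt
          push_neg at hlt
          exact LB_arg3 (by linarith) (by linarith) hint
        · have hc13 : (13:ℝ) < (n:ℝ) := by exact_mod_cast not_le.mp h13
          rw [if_neg h13]
          refine ENNReal.ofReal_le_ofReal ?_
          by_contra hlt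
          push_neg at hlt
          rcases le_or_gt ε 7 with h7 | h7
          · exact LB_arg3 h7 (by linarith) hint
          · exact LB_arg4 h7 (by linarith) hint
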